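/- Fix 1 ≤ k ≤ n−1 and 1 ≤ d. Suppose Σ_{i=1}^{d−1} 3^i · C(n,i) < (2^{2n} − 1)/(2^{n+k} − 1). Then there exists a self-orthogonal additive code C over F_4 of length n and F_2-dimension n−k such that every vector in C^⊥ \ C has Hamming weight at least d. -/

import Mathlib

abbrev F4 := GaloisField 2 2

/-- The trace inner product on F_4^n (its values lie in the subfield F_2). -/
noncomputable def trF {n : ℕ} (u v : Fin n → F4) : F4 :=
  ∑ i, (u i * v i ^ 2 + u i ^ 2 * v i)

/-- An additive code (F_2-subspace of F_4^n) is self-orthogonal if it is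
contained in its trace-dual. -/
def SelfOrth {n : ℕ} (C : Submodule (ZMod 2) (Fin n → F4)) : Prop :=
  ∀ u ∈ C, ∀ v ∈ C, trF u v = 0

/-- Hamming weight of a vector in F_4^n. -/
noncomputable def wt {n : ℕ} (u : Fin n → F4) : ℕ := Nat.card {i : Fin n // u i ≠ 0}

/-!
Over `F₂`, `F₄ⁿ` is a `2n`-dimensional space with the alternating nondegenerate form
`⟨u, w⟩ = ∑ Tr(u_i w_i²)`, whose image in `F₄` is `trF`. Symplectic transvections make its
isometries act transitively on nonzero vectors, so every nonzero vector lies in the dual of the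
same number `N` of members of the family `Φ` of totally isotropic subspaces of dimension `n - k`.
Double counting the pairs `(v, C)` with `v ≠ 0` and `v ∈ C^⊥` gives
`N (2^{2n} - 1) = |Φ| (2^{n+k} - 1)`, so at most `N · ∑ 3^i C(n,i) < |Φ|` members of `Φ`
have a nonzero vector of weight `< d` in their dual.
-/

open Module Finset

instance Submodule.finite_of_finite {R M : Type*} [Semiring R] [AddCommMonoid M] [Module R M]
    [Finite M] : Finite (Submodule R M) :=
  Finite.of_injective _ SetLike.coe_injective

noncomputable instance Submodule.fintypeOfFinite {R M : Type*} [Semiring R] [AddCommMonoid M]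
    [Module R M] [Finite M] : Fintype (Submodule R M) :=
  Fintype.ofFinite _

theorem Submodule.exists_finrank_eq {K V : Type*} [DivisionRing K] [AddCommGroup V] [Module K V]
    [FiniteDimensional K V] {m : ℕ} (hm : m ≤ finrank K V) :
    ∃ W : Submodule K V, finrank K W = m :=
  ⟨span K (Set.range (finBasis K V ∘ Fin.castLE hm)), by
    rw [finrank_span_eq_card ((finBasis K V).linearIndependent.comp _ (Fin.castLE_injective hm)),
      Fintype.card_fin]⟩

namespace LinearMap.BilinForm

variable {K V : Type*} [Field K] [AddCommGroup V] [Module K V] {B : LinearMap.BilinForm K V}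

variable (B) in
def transvection (a : V) (c : K) : V →ₗ[K] V :=
  LinearMap.id + (B.flip a).smulRight (c • a)

theorem transvection_apply (a : V) (c : K) (x : V) :
    B.transvection a c x = x + (c * B x a) • a := by
  simp [transvection, mul_smul, smul_comm c]

theorem transvection_isometry (hB : B.IsAlt) (a : V) (c : K) (x y : V) :
    B (B.transvection a c x) (B.transvection a c y) = B x y := by
  simp only [transvection_apply, map_add, map_smul, LinearMap.add_apply, LinearMap.smul_apply,
    smul_eq_mul, hB.self_eq_zero, ← hB.neg_eq a]
  ring

theorem injective_of_isometry (hnd : B.Nondegenerate) {g : V →ₗ[K] V}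
    (hg : ∀ x y, B (g x) (g y) = B x y) : Function.Injective g := by
  rw [← LinearMap.ker_eq_bot, Submodule.eq_bot_iff]
  intro x hx
  exact hnd.1 x fun y => by rw [← hg, LinearMap.mem_ker.1 hx, map_zero, LinearMap.zero_apply]

theorem exists_isometry_of_apply_ne_zero (hB : B.IsAlt) {u v : V} (huv : B u v ≠ 0) :
    ∃ g : V →ₗ[K] V, (∀ x y, B (g x) (g y) = B x y) ∧ g u = v := by
  refine ⟨B.transvection (v - u) (B u v)⁻¹, transvection_isometry hB _ _, ?_⟩
  rw [transvection_apply, map_sub, hB.self_eq_zero, sub_zero, inv_mul_cancel₀ huv, one_smul,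
    add_sub_cancel]

theorem exists_apply_ne_zero_and_ne_zero (hnd : B.Nondegenerate) {u v : V} (hu : u ≠ 0)
    (hv : v ≠ 0) : ∃ w, B u w ≠ 0 ∧ B w v ≠ 0 := by
  obtain ⟨a, ha⟩ : ∃ a, B u a ≠ 0 := by
    by_contra! h
    exact hu (hnd.1 u h)
  obtain ⟨b, hb⟩ : ∃ b, B b v ≠ 0 := by
    by_contra! h
    exact hv (hnd.2 v h)
  by_cases hav : B a v = 0
  · by_cases hub : B u b = 0
    · exact ⟨a + b, by simpa [hub], by simpa [hav]⟩
    · exact ⟨b, hub, hb⟩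
  · exact ⟨a, ha, hav⟩

theorem exists_isometry_apply_eq (hB : B.IsAlt) (hnd : B.Nondegenerate) {u v : V}
    (hu : u ≠ 0) (hv : v ≠ 0) :
    ∃ g : V →ₗ[K] V, (∀ x y, B (g x) (g y) = B x y) ∧ g u = v := by
  obtain ⟨w, huw, hwv⟩ := exists_apply_ne_zero_and_ne_zero hnd hu hv
  obtain ⟨g₁, hg₁, rfl⟩ := exists_isometry_of_apply_ne_zero hB huw
  obtain ⟨g₂, hg₂, rfl⟩ := exists_isometry_of_apply_ne_zero hB hwv
  exact ⟨g₂ ∘ₗ g₁, fun x y => (hg₂ _ _).trans (hg₁ x y), rfl⟩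

section TotallyIsotropic

open scoped Classical

variable [Finite V]

variable (B) in
noncomputable def totallyIsotropic (m : ℕ) : Finset (Submodule K V) :=
  {C | C ≤ B.orthogonal C ∧ finrank K C = m}

theorem mem_totallyIsotropic {m : ℕ} {C : Submodule K V} :
    C ∈ B.totallyIsotropic m ↔ C ≤ B.orthogonal C ∧ finrank K C = m := by
  simp [totallyIsotropic]

theorem totallyIsotropic_nonempty_of_injective {W : Type*} [AddCommGroup W] [Module K W]
    [FiniteDimensional K W] {ι : W →ₗ[K] V} (hι : Function.Injective ι)
    (hιB : ∀ x y, B (ι x) (ι y) = 0) {m : ℕ} (hm : m ≤ finrank K W) :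
    (B.totallyIsotropic m).Nonempty := by
  obtain ⟨U, hU⟩ := Submodule.exists_finrank_eq hm
  refine ⟨U.map ι, mem_totallyIsotropic.2
    ⟨?_, (Submodule.equivMapOfInjective ι hι U).finrank_eq.symm.trans hU⟩⟩
  rintro _ ⟨x, -, rfl⟩ _ ⟨y, -, rfl⟩
  exact hιB y x

theorem map_mem_totallyIsotropic {g : V →ₗ[K] V} (hg : ∀ x y, B (g x) (g y) = B x y)
    (hginj : Function.Injective g) {m : ℕ} {C : Submodule K V} (hC : C ∈ B.totallyIsotropic m) :
    C.map g ∈ B.totallyIsotropic m := by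
  rw [mem_totallyIsotropic] at hC ⊢
  refine ⟨?_, (Submodule.equivMapOfInjective g hginj C).finrank_eq.symm.trans hC.2⟩
  rintro _ ⟨x, hx, rfl⟩ _ ⟨y, hy, rfl⟩
  rw [hg]
  exact hC.1 hx y hy

theorem card_filter_mem_orthogonal_le (hnd : B.Nondegenerate) {g : V →ₗ[K] V}
    (hg : ∀ x y, B (g x) (g y) = B x y) (m : ℕ) (u : V) :
    #{C ∈ B.totallyIsotropic m | u ∈ B.orthogonal C} ≤
      #{C ∈ B.totallyIsotropic m | g u ∈ B.orthogonal C} := by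
  have hginj := injective_of_isometry hnd hg
  refine card_le_card_of_injOn (Submodule.map g) (fun C hC => ?_)
    (Submodule.map_injective_of_injective hginj).injOn
  rw [mem_coe, mem_filter] at hC ⊢
  refine ⟨map_mem_totallyIsotropic hg hginj hC.1, ?_⟩
  rintro _ ⟨x, hx, rfl⟩
  rw [hg]
  exact hC.2 x hx

theorem card_filter_mem_orthogonal_eq (hB : B.IsAlt) (hnd : B.Nondegenerate) (m : ℕ) {u v : V}
    (hu : u ≠ 0) (hv : v ≠ 0) :
    #{C ∈ B.totallyIsotropic m | u ∈ B.orthogonal C} =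
      #{C ∈ B.totallyIsotropic m | v ∈ B.orthogonal C} := by
  obtain ⟨g, hg, rfl⟩ := exists_isometry_apply_eq hB hnd hu hv
  obtain ⟨h, hh, hhv⟩ := exists_isometry_apply_eq hB hnd hv hu
  refine (card_filter_mem_orthogonal_le hnd hg m u).antisymm ?_
  simpa only [hhv] using card_filter_mem_orthogonal_le hnd hh m (g u)

end TotallyIsotropic

open scoped Classical in
theorem card_orthogonal [Fintype K] [Fintype V] (hnd : B.Nondegenerate) (C : Submodule K V) :
    Fintype.card ↥(B.orthogonal C) = Fintype.card K ^ (finrank K V - finrank K C) := by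
  rw [Module.card_eq_pow_finrank (K := K), finrank_orthogonal hnd]

open scoped Classical in
theorem exists_mem_totallyIsotropic_forall_notMem_orthogonal [Fintype K] [Fintype V]
    (hB : B.IsAlt) (hnd : B.Nondegenerate) {m : ℕ} (hm : (B.totallyIsotropic m).Nonempty)
    (S : Finset V) (hS : 0 ∉ S)
    (hcard : #S * (Fintype.card K ^ (finrank K V - m) - 1) < Fintype.card K ^ finrank K V - 1) :
    ∃ C ∈ B.totallyIsotropic m, ∀ v ∈ S, v ∉ B.orthogonal C := by
  obtain rfl | ⟨v₀, hv₀⟩ := S.eq_empty_or_nonempty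
  · obtain ⟨C, hC⟩ := hm
    exact ⟨C, hC, by simp⟩
  have hne : ∀ v ∈ S, v ≠ 0 := fun v hv h => hS (h ▸ hv)
  set q := Fintype.card K
  set Φ := B.totallyIsotropic m
  set N := #{C ∈ Φ | v₀ ∈ B.orthogonal C}
  have hdouble : (q ^ finrank K V - 1) * N = #Φ * (q ^ (finrank K V - m) - 1) := by
    have hV : #(univ.erase (0 : V)) = q ^ finrank K V - 1 := by
      rw [card_erase_of_mem (mem_univ _), card_univ, Module.card_eq_pow_finrank (K := K)]
    rw [← hV]
    refine card_mul_eq_card_mul (fun v C => v ∈ B.orthogonal C) (fun v hv => ?_) (fun C hC => ?_)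
    · exact card_filter_mem_orthogonal_eq hB hnd m (ne_of_mem_erase hv) (hne v₀ hv₀)
    · rw [bipartiteBelow, filter_erase, card_erase_of_mem (by simp),
        ← Fintype.card_subtype (fun v => v ∈ B.orthogonal C),
        card_orthogonal hnd, (mem_totallyIsotropic.1 hC).2]
  have hbad : #(S.biUnion fun v => {C ∈ Φ | v ∈ B.orthogonal C}) ≤ #S * N :=
    card_biUnion_le_card_mul _ _ _ fun v hv =>
      (card_filter_mem_orthogonal_eq hB hnd m (hne v hv) (hne v₀ hv₀)).le
  have hgood : #S * N < #Φ := by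
    refine Nat.lt_of_mul_lt_mul_right (a := q ^ finrank K V - 1) ?_
    calc #S * N * (q ^ finrank K V - 1) = #Φ * (#S * (q ^ (finrank K V - m) - 1)) := by
          rw [mul_assoc, mul_comm N, hdouble]; ring
      _ < #Φ * (q ^ finrank K V - 1) := Nat.mul_lt_mul_of_pos_left hcard hm.card_pos
  obtain ⟨C, hC, hCbad⟩ := exists_mem_notMem_of_card_lt_card (hbad.trans_lt hgood)
  exact ⟨C, hC, fun v hv hvC => hCbad (mem_biUnion.2 ⟨v, hv, mem_filter.2 ⟨hC, hvC⟩⟩)⟩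

end LinearMap.BilinForm

theorem card_filter_hammingNorm_eq_le {ι α : Type*} [Fintype ι] [DecidableEq ι] [Fintype α]
    [DecidableEq α] [Zero α] (i : ℕ) :
    #{v : ι → α | hammingNorm v = i} ≤
      (Fintype.card ι).choose i * (Fintype.card α - 1) ^ i := by
  let vectorsWithSupport (s : Finset ι) : Finset (ι → α) :=
    Fintype.piFinset fun j => if j ∈ s then univ.erase 0 else {0}
  have hsub : ({v | hammingNorm v = i} : Finset (ι → α)) ⊆
      (powersetCard i univ).biUnion vectorsWithSupport := by
    intro v hv
    rw [mem_filter] at hv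
    refine mem_biUnion.2
      ⟨({j | v j ≠ 0} : Finset ι), mem_powersetCard.2 ⟨subset_univ _, hv.2⟩, ?_⟩
    refine Fintype.mem_piFinset.2 fun j => ?_
    by_cases hj : v j = 0 <;> simp [hj]
  have hcard :
      ∀ s ∈ powersetCard i univ, #(vectorsWithSupport s) = (Fintype.card α - 1) ^ i := by
    intro s hs
    rw [Fintype.card_piFinset, ← (mem_powersetCard.1 hs).2]
    simp [apply_ite card, prod_ite_mem]
  calc _ ≤ _ := card_le_card hsub
    _ ≤ _ := card_biUnion_le_card_mul _ _ _ fun s hs => (hcard s hs).le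
    _ = _ := by rw [card_powersetCard, card_univ]

theorem card_filter_hammingNorm_lt_le {ι α : Type*} [Fintype ι] [DecidableEq ι] [Fintype α]
    [DecidableEq α] [Zero α] (d : ℕ) :
    #{v : ι → α | v ≠ 0 ∧ hammingNorm v < d} ≤
      ∑ i ∈ Icc 1 (d - 1), (Fintype.card ι).choose i * (Fintype.card α - 1) ^ i := by
  have hsub : ({v | v ≠ 0 ∧ hammingNorm v < d} : Finset (ι → α)) ⊆
      (Icc 1 (d - 1)).biUnion fun i => {v | hammingNorm v = i} := by
    intro v hv
    rw [mem_filter, ← hammingNorm_pos_iff] at hv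
    exact mem_biUnion.2 ⟨hammingNorm v, mem_Icc.2 ⟨hv.2.1, by omega⟩, by simp⟩
  exact (card_le_card hsub).trans <| card_biUnion_le.trans <|
    sum_le_sum fun i _ => card_filter_hammingNorm_eq_le i

noncomputable instance : Fintype F4 := Fintype.ofFinite F4

noncomputable instance : DecidableEq F4 := Classical.decEq F4

theorem F4.finrank : finrank (ZMod 2) F4 = 2 := GaloisField.finrank 2 two_ne_zero

theorem F4.card : Fintype.card F4 = 4 := by
  rw [Fintype.card_eq_nat_card, GaloisField.card 2 2 two_ne_zero]; rfl

theorem F4.pow_four (x : F4) : x ^ 4 = x := F4.card ▸ FiniteField.pow_card x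

theorem F4.algebraMap_trace (y : F4) :
    algebraMap (ZMod 2) F4 (Algebra.trace (ZMod 2) F4 y) = y + y ^ 2 := by
  rw [FiniteField.algebraMap_trace_eq_sum_pow, F4.finrank, Nat.card_zmod]
  simp [sum_range_succ]

noncomputable def traceInner (n : ℕ) : LinearMap.BilinForm (ZMod 2) (Fin n → F4) :=
  LinearMap.mk₂ (ZMod 2) (fun u v => Algebra.trace (ZMod 2) F4 (∑ i, u i * v i ^ 2))
    (fun u u' v => by simp [add_mul, sum_add_distrib])
    (fun c u v => by simp [← smul_sum])
    (fun u v v' => by simp [CharTwo.add_sq, mul_add, sum_add_distrib])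
    (fun c u v => by simp [smul_pow, ZMod.pow_card, ← smul_sum])

theorem algebraMap_traceInner {n : ℕ} (u v : Fin n → F4) :
    algebraMap (ZMod 2) F4 (traceInner n u v) = trF u v := by
  have hsq : (∑ i, u i * v i ^ 2) ^ 2 = ∑ i, u i ^ 2 * v i := by
    rw [sum_pow_char 2]
    refine sum_congr rfl fun i _ => ?_
    rw [mul_pow, ← pow_mul, F4.pow_four]
  simp only [traceInner, LinearMap.mk₂_apply, F4.algebraMap_trace, hsq, trF, sum_add_distrib]

theorem trF_eq_zero_iff {n : ℕ} (u v : Fin n → F4) : trF u v = 0 ↔ traceInner n u v = 0 := by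
  rw [← algebraMap_traceInner, map_eq_zero]

theorem traceInner_isAlt (n : ℕ) : (traceInner n).IsAlt := fun u => by
  rw [← trF_eq_zero_iff, trF]
  exact sum_eq_zero fun i _ => by
    rw [mul_comm (u i)]; exact CharTwo.add_self_eq_zero _

theorem traceInner_nondegenerate (n : ℕ) : (traceInner n).Nondegenerate := by
  refine .ofSeparatingLeft fun u hu => ?_
  by_contra! hu0
  obtain ⟨i, hi⟩ := Function.ne_iff.1 hu0
  obtain ⟨b, hb⟩ : ∃ b, Algebra.trace (ZMod 2) F4 (u i * b) ≠ 0 := by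
    by_contra! h
    exact hi ((traceForm_nondegenerate (ZMod 2) F4).1 (u i) (by simpa using h))
  have hsum : ∑ j, u j * (Pi.single i (b ^ 2) : Fin n → F4) j ^ 2 = u i * b := by
    rw [sum_eq_single i (fun j _ hj => by simp [hj]) (by simp), Pi.single_eq_same, ← pow_mul,
      F4.pow_four]
  have := hu (Pi.single i (b ^ 2) : Fin n → F4)
  rw [traceInner, LinearMap.mk₂_apply, hsum] at this
  exact hb this

theorem finrank_F4_pi (n : ℕ) : finrank (ZMod 2) (Fin n → F4) = 2 * n := by
  rw [finrank_pi_fintype, sum_const, F4.finrank, card_univ, Fintype.card_fin, smul_eq_mul,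
    mul_comm]

theorem traceInner_algebraMap_comp {n : ℕ} (x y : Fin n → ZMod 2) :
    traceInner n (algebraMap (ZMod 2) F4 ∘ x) (algebraMap (ZMod 2) F4 ∘ y) = 0 := by
  simp only [traceInner, LinearMap.mk₂_apply, Function.comp_apply, ← map_pow, ← map_mul,
    ← map_sum, Algebra.trace_algebraMap, F4.finrank, two_nsmul, CharTwo.add_self_eq_zero]

theorem wt_eq_hammingNorm {n : ℕ} (u : Fin n → F4) : wt u = hammingNorm u := by
  rw [wt, Nat.card_eq_fintype_card, Fintype.card_subtype]
  rfl

theorem selfOrth_iff_le_orthogonal {n : ℕ} {C : Submodule (ZMod 2) (Fin n → F4)} :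
    SelfOrth C ↔ C ≤ (traceInner n).orthogonal C := by
  simp only [SelfOrth, trF_eq_zero_iff]
  exact ⟨fun h u hu v hv => h v hv u hu, fun h u hu v hv => h hv u hu⟩

theorem traceInner_totallyIsotropic_nonempty {n m : ℕ} (hm : m ≤ n) :
    ((traceInner n).totallyIsotropic m).Nonempty :=
  LinearMap.BilinForm.totallyIsotropic_nonempty_of_injective
    (ι := LinearMap.compLeft (Algebra.linearMap (ZMod 2) F4) (Fin n))
    (fun x y h => funext fun i => (algebraMap (ZMod 2) F4).injective (congr_fun h i))
    traceInner_algebraMap_comp (by rwa [finrank_fin_fun])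

theorem quantum_GV_general (n k d : ℕ)
    (hGV : (∑ i ∈ Finset.Icc 1 (d - 1), 3 ^ i * n.choose i) * (2 ^ (n + k) - 1)
            < 2 ^ (2 * n) - 1) :
    ∃ C : Submodule (ZMod 2) (Fin n → F4),
      SelfOrth C ∧ Module.finrank (ZMod 2) C = n - k ∧
      ∀ u : Fin n → F4, (∀ w ∈ C, trF u w = 0) → u ∉ C → d ≤ wt u := by
  let S : Finset (Fin n → F4) := {v | v ≠ 0 ∧ hammingNorm v < d}
  have hS : #S * (2 ^ (2 * n - (n - k)) - 1) < 2 ^ (2 * n) - 1 := by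
    have hball : #S ≤ ∑ i ∈ Icc 1 (d - 1), 3 ^ i * n.choose i := by
      simpa [F4.card, mul_comm] using card_filter_hammingNorm_lt_le (ι := Fin n) (α := F4) d
    refine lt_of_le_of_lt (Nat.mul_le_mul hball ?_) hGV
    exact Nat.sub_le_sub_right (Nat.pow_le_pow_right two_pos (by omega)) 1
  obtain ⟨C, hC, hCS⟩ :=
    (traceInner n).exists_mem_totallyIsotropic_forall_notMem_orthogonal (traceInner_isAlt n)
      (traceInner_nondegenerate n) (traceInner_totallyIsotropic_nonempty (n.sub_le k)) S
      (by simp [S]) (by rwa [ZMod.card, finrank_F4_pi])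
  obtain ⟨hCiso, hCdim⟩ := LinearMap.BilinForm.mem_totallyIsotropic.1 hC
  refine ⟨C, selfOrth_iff_le_orthogonal.2 hCiso, hCdim, fun u hu huC => ?_⟩
  have hu_orth : u ∈ (traceInner n).orthogonal C := fun w hw =>
    (traceInner_isAlt n).isRefl _ _ ((trF_eq_zero_iff u w).1 (hu w hw))
  have hu0 : u ≠ 0 := fun h => huC (h ▸ C.zero_mem)
  by_contra! hlt
  exact hCS u (by simp [S, hu0, ← wt_eq_hammingNorm, hlt]) hu_orth

/-- the quantitative quantum Gilbert–Varshamov bound.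
If Σ_{i=1}^{d-1} 3^i C(n,i) < (2^{2n}-1)/(2^{n+k}-1) (stated fraction-free)
then there exists a self-orthogonal additive code C over F_4 of length n and
F_2-dimension n-k all of whose vectors in C^⊥ \ C have weight ≥ d. -/
theorem quantum_GV (n k d : ℕ) (hk1 : 1 ≤ k) (hkn : k ≤ n - 1) (hd : 1 ≤ d)
    (hGV : (∑ i ∈ Finset.Icc 1 (d - 1), 3 ^ i * n.choose i) * (2 ^ (n + k) - 1)
            < 2 ^ (2 * n) - 1) :
    ∃ C : Submodule (ZMod 2) (Fin n → F4),
      SelfOrth C ∧ Module.finrank (ZMod 2) C = n - k ∧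
      ∀ u : Fin n → F4, (∀ w ∈ C, trF u w = 0) → u ∉ C → d ≤ wt u :=
  quantum_GV_general n k d hGV
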